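/- Let D be a nonempty finite set of forbidden patterns and let r, r₁, r₂ be as defined. Then for every n ≥ r₁ + r₂ and every integer l ≥ 1, one has δ_N(D) ≥ ⌈2^{−(r₁+r₂)} · δ_n(D)⌉^l, where N = l·(n − r₁ − r₂ + r + 1). -/

import Mathlib

/-- The integer value of a binary symbol. -/
def boolToInt (b : Bool) : ℤ := if b then 1 else 0

/-- Componentwise difference of two binary words, a word over `{-1, 0, +1}`. -/
def diffWord (u v : List Bool) : List ℤ :=
  List.zipWith (fun a b => boolToInt a - boolToInt b) u v

/-- A forbidden pattern: a nonempty finite word over the alphabet `{-1, 0, +1}`. -/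
def IsPattern (p : List ℤ) : Prop :=
  p ≠ [] ∧ ∀ x ∈ p, x = -1 ∨ x = 0 ∨ x = 1

/-- A code `C` of binary words avoids the forbidden set `D` if no difference of two
distinct code words contains a pattern of `D` as a contiguous subword (factor). -/
def AvoidsCode (D : Finset (List ℤ)) (C : Finset (List Bool)) : Prop :=
  ∀ u ∈ C, ∀ v ∈ C, u ≠ v → ∀ p ∈ D, ¬ p <:+: diffWord u v

/-- `delta D n` : the maximal cardinality of a code of binary words of length `n`
avoiding the forbidden set `D`. -/
noncomputable def delta (D : Finset (List ℤ)) (n : ℕ) : ℕ :=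
  sSup {k : ℕ | ∃ C : Finset (List Bool),
    (∀ u ∈ C, u.length = n) ∧ AvoidsCode D C ∧ C.card = k}

/-- The capacity of a set of forbidden difference patterns. -/
noncomputable def cap (D : Finset (List ℤ)) : ℝ :=
  Filter.limsup (fun n : ℕ => Real.logb 2 (delta D n) / n) Filter.atTop

/-!
Pigeonhole on the first `r₁` and the last `r₂` letters of an optimal code of length `n` gives a
set `S` of at least `δ_n / 2^(r₁+r₂)` middles `s` such that the words `t₁ ++ s ++ t₂` with a
common frame `(t₁, t₂)` belong to the code. Concatenating `l` middles, each followed by a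
separator of `r + 1` zeros, yields `|S|^l` words of length `N`. A pattern occurring in the
difference of two of them has no run of `r + 1` zeros, so it cannot contain a separator and lies
inside `0^(r+1) ++ Δ ++ 0^(r+1)` for the difference `Δ` of two middles; as it begins with at most
`r₁` and ends with at most `r₂` zeros, it then lies inside `0^r₁ ++ Δ ++ 0^r₂`, the difference of
two framed code words, which is impossible. All-zero patterns have length at most `r₁`, so they
are excluded as soon as two framed words differ.
-/

open List

namespace List

variable {α : Type*}

theorem not_infix_replicate {a : α} {p : List α} (hp : ∃ x ∈ p, x ≠ a) (k : ℕ) :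
    ¬ p <:+: replicate k a := fun h =>
  let ⟨_, hx, hxa⟩ := hp
  hxa (eq_of_mem_replicate (h.subset hx))

theorem IsInfix.of_infix_append_append {p A Z B : List α} (h : p <:+: A ++ Z ++ B) :
    p <:+: A ++ Z ∨ p <:+: Z ++ B ∨ Z <:+: p := by
  obtain ⟨s, t, hst⟩ := h
  simp only [append_assoc] at hst
  rcases append_eq_append_iff.1 hst with ⟨a, rfl, hpt⟩ | ⟨c, rfl, hZB⟩
  · rcases append_eq_append_iff.1 hpt with ⟨x, rfl, -⟩ | ⟨y, rfl, hyt⟩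
    · exact Or.inl ⟨s, x ++ Z, by simp⟩
    · rcases append_eq_append_iff.1 hyt with ⟨q, rfl, -⟩ | ⟨q, rfl, -⟩
      · exact Or.inr (Or.inr ⟨a, q, by simp⟩)
      · exact Or.inl ⟨s, q, by simp⟩
  · exact Or.inr (Or.inl ⟨c, t, by simp [hZB]⟩)

theorem IsInfix.replicate_append_of_replicate_append {a : α} {p X : List α} {k R : ℕ}
    (hp : ∃ x ∈ p, x ≠ a) (hR : ∀ j, replicate j a <+: p → j ≤ R)
    (h : p <:+: replicate k a ++ X) : p <:+: replicate R a ++ X := by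
  obtain ⟨s, t, hst⟩ := h
  simp only [append_assoc] at hst
  rcases append_eq_append_iff.1 hst with ⟨b, hk, hpt⟩ | ⟨c, -, hX⟩
  · have hb : b = replicate b.length a := (suffix_replicate_iff.1 ⟨s, hk.symm⟩).2
    rcases append_eq_append_iff.1 hpt with ⟨x, rfl, -⟩ | ⟨q, rfl, rfl⟩
    · refine absurd ?_ (not_infix_replicate hp k)
      rw [hk]
      exact (prefix_append p x).isInfix.trans (suffix_append s _).isInfix
    · have hbR : b.length ≤ R := hR _ (by rw [← hb]; exact prefix_append b q)
      refine ⟨replicate (R - b.length) a, t, ?_⟩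
      rw [hb, ← append_assoc, ← append_assoc, ← replicate_add, length_replicate,
        Nat.sub_add_cancel hbR]
  · exact ⟨replicate R a ++ c, t, by simp [hX]⟩

theorem IsInfix.append_replicate_of_append_replicate {a : α} {p X : List α} {k R : ℕ}
    (hp : ∃ x ∈ p, x ≠ a) (hR : ∀ j, replicate j a <:+ p → j ≤ R)
    (h : p <:+: X ++ replicate k a) : p <:+: X ++ replicate R a := by
  rw [← reverse_infix, reverse_append, reverse_replicate] at h ⊢
  refine h.replicate_append_of_replicate_append (by simpa using hp) fun j hj => hR j ?_
  rwa [← reverse_prefix, reverse_replicate]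

end List

theorem diffWord_self (u : List Bool) : diffWord u u = replicate u.length 0 := by
  induction u <;> simp_all [diffWord, replicate_succ]

theorem diffWord_append {u u' v v' : List Bool} (h : u.length = u'.length) :
    diffWord (u ++ v) (u' ++ v') = diffWord u u' ++ diffWord v v' :=
  zipWith_append h

theorem diffWord_frame (t₁ t₂ : List Bool) {s s' : List Bool} (h : s.length = s'.length) :
    diffWord (t₁ ++ s ++ t₂) (t₁ ++ s' ++ t₂) =
      replicate t₁.length 0 ++ diffWord s s' ++ replicate t₂.length 0 := by
  rw [diffWord_append (by simp [h]), diffWord_append rfl, diffWord_self, diffWord_self]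

def wordsOfLength (n : ℕ) : Finset (List Bool) :=
  (Finset.univ : Finset (List.Vector Bool n)).map
    ⟨List.Vector.toList, List.Vector.toList_injective⟩

theorem mem_wordsOfLength {n : ℕ} {u : List Bool} : u ∈ wordsOfLength n ↔ u.length = n :=
  ⟨fun h => by obtain ⟨v, -, rfl⟩ := Finset.mem_map.1 h; exact v.2,
    fun h => Finset.mem_map.2 ⟨⟨u, h⟩, Finset.mem_univ _, rfl⟩⟩

theorem card_wordsOfLength (n : ℕ) : (wordsOfLength n).card = 2 ^ n := by
  simp [wordsOfLength]

section Codes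

variable {D : Finset (List ℤ)}

theorem AvoidsCode.mono {C C' : Finset (List Bool)} (h : AvoidsCode D C) (hsub : C' ⊆ C) :
    AvoidsCode D C' :=
  fun u hu v hv => h u (hsub hu) v (hsub hv)

theorem bddAbove_avoidsCode_card (D : Finset (List ℤ)) (n : ℕ) :
    BddAbove {k : ℕ | ∃ C : Finset (List Bool),
      (∀ u ∈ C, u.length = n) ∧ AvoidsCode D C ∧ C.card = k} := by
  refine ⟨2 ^ n, ?_⟩
  rintro _ ⟨C, hC, -, rfl⟩
  exact card_wordsOfLength n ▸ Finset.card_le_card fun u hu => mem_wordsOfLength.2 (hC u hu)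

theorem card_le_delta {C : Finset (List Bool)} {n : ℕ} (hlen : ∀ u ∈ C, u.length = n)
    (hC : AvoidsCode D C) : C.card ≤ delta D n :=
  le_csSup (bddAbove_avoidsCode_card D n) ⟨C, hlen, hC, rfl⟩

theorem exists_avoidsCode_card_eq_delta (D : Finset (List ℤ)) (n : ℕ) :
    ∃ C : Finset (List Bool), (∀ u ∈ C, u.length = n) ∧ AvoidsCode D C ∧ C.card = delta D n := by
  refine Nat.sSup_mem ?_ (bddAbove_avoidsCode_card D n)
  exact ⟨0, ∅, by simp, by simp [AvoidsCode], rfl⟩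

theorem exists_ne_zero_of_avoidsCode {C : Finset (List Bool)} {u v : List Bool} {r₁ : ℕ}
    (hC : AvoidsCode D C) (hu : u ∈ C) (hv : v ∈ C) (huv : u ≠ v)
    (hpre : replicate r₁ 0 <+: diffWord u v)
    (h₁ : ∀ k : ℕ, (∃ p ∈ D, replicate k (0:ℤ) <+: p) → k ≤ r₁) :
    ∀ p ∈ D, ∃ x ∈ p, x ≠ 0 := by
  intro p hp
  by_contra! hzero
  have hrep : p = replicate p.length 0 := eq_replicate_iff.2 ⟨rfl, hzero⟩
  have hlen : p.length ≤ r₁ := h₁ _ ⟨p, hp, by rw [← hrep]⟩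
  exact hC u hu v hv huv p hp ((prefix_replicate_iff.2 ⟨hlen, hrep⟩).trans hpre).isInfix

end Codes

theorem exists_le_card_filter_take_drop {C : Finset (List Bool)} {n r₁ r₂ : ℕ}
    (hC : ∀ u ∈ C, u.length = n) (hn : r₁ + r₂ ≤ n) :
    ∃ t₁ t₂ : List Bool, t₁.length = r₁ ∧ t₂.length = r₂ ∧ (C.card : ℝ) / 2 ^ (r₁ + r₂) ≤
      (C.filter fun c => (c.take r₁, c.drop (n - r₂)) = (t₁, t₂)).card := by
  have hmaps : ∀ c ∈ C, (c.take r₁, c.drop (n - r₂)) ∈ wordsOfLength r₁ ×ˢ wordsOfLength r₂ := by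
    intro c hc
    simp only [Finset.mem_product, mem_wordsOfLength, length_take, length_drop, hC c hc]
    omega
  have hne : (wordsOfLength r₁ ×ˢ wordsOfLength r₂).Nonempty :=
    ⟨(replicate r₁ false, replicate r₂ false), by simp [mem_wordsOfLength]⟩
  obtain ⟨⟨t₁, t₂⟩, ht, hfiber⟩ :=
    Finset.exists_le_card_fiber_of_nsmul_le_card_of_maps_to hmaps hne
      (b := (C.card : ℝ) / 2 ^ (r₁ + r₂)) (by
        rw [Finset.card_product, card_wordsOfLength, card_wordsOfLength, nsmul_eq_mul,
          ← pow_add]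
        push_cast
        rw [mul_div_cancel₀ _ (by positivity)])
  simp only [Finset.mem_product, mem_wordsOfLength] at ht
  exact ⟨t₁, t₂, ht.1, ht.2, hfiber⟩

theorem exists_framed_subcode {C : Finset (List Bool)} {n r₁ r₂ : ℕ}
    (hC : ∀ u ∈ C, u.length = n) (hn : r₁ + r₂ ≤ n) :
    ∃ t₁ t₂ : List Bool, ∃ S : Finset (List Bool), t₁.length = r₁ ∧ t₂.length = r₂ ∧
      (∀ s ∈ S, s.length = n - r₁ - r₂) ∧ S.image (fun s => t₁ ++ s ++ t₂) ⊆ C ∧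
      (C.card : ℝ) / 2 ^ (r₁ + r₂) ≤ S.card := by
  obtain ⟨t₁, t₂, ht₁, ht₂, hfiber⟩ := exists_le_card_filter_take_drop hC hn
  set F := C.filter fun c => (c.take r₁, c.drop (n - r₂)) = (t₁, t₂)
  set mid : List Bool → List Bool := fun c => (c.take (n - r₂)).drop r₁
  have hframe : ∀ c ∈ F, t₁ ++ mid c ++ t₂ = c := by
    intro c hc
    obtain ⟨-, h₁, h₂⟩ : c ∈ C ∧ c.take r₁ = t₁ ∧ c.drop (n - r₂) = t₂ := by simpa [F] using hc
    calc t₁ ++ mid c ++ t₂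
        = (c.take (n - r₂)).take r₁ ++ (c.take (n - r₂)).drop r₁ ++ c.drop (n - r₂) := by
          rw [take_take, min_eq_left (by omega), h₁, h₂]
      _ = c := by rw [take_append_drop, take_append_drop]
  have himage : (F.image mid).image (fun s => t₁ ++ s ++ t₂) = F := by
    rw [Finset.image_image]
    exact (Finset.image_congr fun c hc => hframe c hc).trans Finset.image_id
  have hinj : Function.Injective fun s : List Bool => t₁ ++ s ++ t₂ :=
    fun s s' h => append_cancel_left (append_cancel_right h)
  refine ⟨t₁, t₂, F.image mid, ht₁, ht₂, ?_, ?_, ?_⟩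
  · rintro s hs
    obtain ⟨c, hc, rfl⟩ := Finset.mem_image.1 hs
    have := congrArg length (hframe c hc)
    simp only [length_append, ht₁, ht₂, hC c (Finset.mem_filter.1 hc).1] at this
    omega
  · rw [himage]
    exact Finset.filter_subset _ C
  · rwa [← Finset.card_image_of_injective (F.image mid) hinj, himage]

def blockCode (S : Finset (List Bool)) (g : ℕ) : ℕ → Finset (List Bool)
  | 0 => {[]}
  | l + 1 => Finset.image₂ (fun s w => s ++ replicate g false ++ w) S (blockCode S g l)

section BlockCode

variable {S : Finset (List Bool)} {g m : ℕ}

theorem length_of_mem_blockCode (hS : ∀ s ∈ S, s.length = m) :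
    ∀ {l : ℕ} {u : List Bool}, u ∈ blockCode S g l → u.length = l * (m + g)
  | 0, u, hu => by simp_all [blockCode]
  | l + 1, u, hu => by
    obtain ⟨s, hs, w, hw, rfl⟩ := Finset.mem_image₂.1 hu
    simp only [length_append, length_replicate, hS s hs, length_of_mem_blockCode hS hw]
    ring

theorem card_blockCode (hS : ∀ s ∈ S, s.length = m) :
    ∀ l : ℕ, (blockCode S g l).card = S.card ^ l
  | 0 => rfl
  | l + 1 => by
    rw [blockCode, Finset.card_image₂_iff.2, card_blockCode hS l, pow_succ']
    rintro ⟨s, w⟩ hsw ⟨s', w'⟩ hsw' h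
    simp only [Set.mem_prod, Finset.mem_coe] at hsw hsw'
    obtain ⟨hs, hw⟩ := append_inj h (by simp [hS s hsw.1, hS s' hsw'.1])
    exact Prod.ext (append_cancel_right hs) hw

variable {D : Finset (List ℤ)} {r r₁ r₂ : ℕ} {t₁ t₂ : List Bool}

theorem not_infix_replicate_append_diffWord_append_replicate
    (hS : AvoidsCode D (S.image fun s => t₁ ++ s ++ t₂)) (hlen : ∀ s ∈ S, s.length = m)
    (ht₁ : t₁.length = r₁) (ht₂ : t₂.length = r₂)
    (h₁ : ∀ k : ℕ, (∃ p ∈ D, replicate k (0:ℤ) <+: p) → k ≤ r₁)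
    (h₂ : ∀ k : ℕ, (∃ p ∈ D, replicate k (0:ℤ) <:+ p) → k ≤ r₂)
    {p : List ℤ} (hp : p ∈ D) (hp0 : ∃ x ∈ p, x ≠ 0) {s s' : List Bool} (hs : s ∈ S)
    (hs' : s' ∈ S) (a b : ℕ) :
    ¬ p <:+: replicate a 0 ++ diffWord s s' ++ replicate b 0 := by
  intro h
  have htrim : p <:+: replicate r₁ 0 ++ diffWord s s' ++ replicate r₂ 0 := by
    rw [append_assoc] at h
    have h' := h.replicate_append_of_replicate_append hp0 fun k hk => h₁ k ⟨p, hp, hk⟩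
    rw [← append_assoc] at h'
    exact h'.append_replicate_of_append_replicate hp0 fun k hk => h₂ k ⟨p, hp, hk⟩
  by_cases hss : s = s'
  · rw [← hss, diffWord_self, ← replicate_add, ← replicate_add] at htrim
    exact not_infix_replicate hp0 _ htrim
  · rw [← ht₁, ← ht₂, ← diffWord_frame t₁ t₂ ((hlen s hs).trans (hlen s' hs').symm)] at htrim
    have hinj : t₁ ++ s ++ t₂ ≠ t₁ ++ s' ++ t₂ :=
      fun h => hss (append_cancel_left (append_cancel_right h))
    exact hS _ (Finset.mem_image_of_mem _ hs) _ (Finset.mem_image_of_mem _ hs') hinj p hp htrim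

theorem not_infix_replicate_append_diffWord_blockCode
    (hS : AvoidsCode D (S.image fun s => t₁ ++ s ++ t₂)) (hlen : ∀ s ∈ S, s.length = m)
    (ht₁ : t₁.length = r₁) (ht₂ : t₂.length = r₂)
    (h₁ : ∀ k : ℕ, (∃ p ∈ D, replicate k (0:ℤ) <+: p) → k ≤ r₁)
    (h₂ : ∀ k : ℕ, (∃ p ∈ D, replicate k (0:ℤ) <:+ p) → k ≤ r₂)
    (h : ∀ k : ℕ, (∃ p ∈ D, replicate k (0:ℤ) <:+: p) → k ≤ r)
    {p : List ℤ} (hp : p ∈ D) (hp0 : ∃ x ∈ p, x ≠ 0) :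
    ∀ {l : ℕ} {u v : List Bool}, u ∈ blockCode S (r + 1) l → v ∈ blockCode S (r + 1) l →
      ¬ p <:+: replicate (r + 1) 0 ++ diffWord u v
  | 0, u, v, hu, hv => by
    simp only [blockCode, Finset.mem_singleton] at hu hv
    simpa [hu, hv, diffWord] using not_infix_replicate hp0 (r + 1)
  | l + 1, u, v, hu, hv => by
    obtain ⟨s, hs, w, hw, rfl⟩ := Finset.mem_image₂.1 hu
    obtain ⟨s', hs', w', hw', rfl⟩ := Finset.mem_image₂.1 hv
    have hdiff : replicate (r + 1) 0 ++ diffWord (s ++ replicate (r + 1) false ++ w)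
        (s' ++ replicate (r + 1) false ++ w') = (replicate (r + 1) 0 ++ diffWord s s') ++
          replicate (r + 1) 0 ++ diffWord w w' := by
      have hss' := (hlen s hs).trans (hlen s' hs').symm
      rw [diffWord_append (by simp [hss']), diffWord_append hss', diffWord_self]
      simp
    rw [hdiff]
    intro hocc
    rcases hocc.of_infix_append_append with hblock | hrest | hsep
    · exact not_infix_replicate_append_diffWord_append_replicate hS hlen ht₁ ht₂ h₁ h₂ hp hp0
        hs hs' _ _ hblock
    · exact not_infix_replicate_append_diffWord_blockCode hS hlen ht₁ ht₂ h₁ h₂ h hp hp0 hw hw'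
        hrest
    · exact absurd (h _ ⟨p, hp, hsep⟩) (Nat.not_succ_le_self r)

theorem avoidsCode_blockCode
    (hS : AvoidsCode D (S.image fun s => t₁ ++ s ++ t₂)) (hlen : ∀ s ∈ S, s.length = m)
    (ht₁ : t₁.length = r₁) (ht₂ : t₂.length = r₂)
    (h₁ : ∀ k : ℕ, (∃ p ∈ D, replicate k (0:ℤ) <+: p) → k ≤ r₁)
    (h₂ : ∀ k : ℕ, (∃ p ∈ D, replicate k (0:ℤ) <:+ p) → k ≤ r₂)
    (h : ∀ k : ℕ, (∃ p ∈ D, replicate k (0:ℤ) <:+: p) → k ≤ r) (l : ℕ) :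
    AvoidsCode D (blockCode S (r + 1) l) := by
  intro u hu v hv huv p hp hocc
  have hcard : 1 < S.card := by
    by_contra! hS1
    have : (blockCode S (r + 1) l).card ≤ 1 := card_blockCode hlen l ▸ pow_le_one₀ (by simp) hS1
    exact huv (Finset.card_le_one.1 this u hu v hv)
  obtain ⟨s, hs, s', hs', hss⟩ := Finset.one_lt_card.1 hcard
  have hp0 := exists_ne_zero_of_avoidsCode hS (Finset.mem_image_of_mem _ hs)
    (Finset.mem_image_of_mem _ hs')
    (fun h => hss (append_cancel_left (append_cancel_right h)))
    ⟨_, by rw [diffWord_frame t₁ t₂ ((hlen s hs).trans (hlen s' hs').symm), ht₁, append_assoc]⟩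
    h₁ p hp
  exact not_infix_replicate_append_diffWord_blockCode hS hlen ht₁ ht₂ h₁ h₂ h hp hp0 hu hv
    (hocc.trans (suffix_append _ _).isInfix)

end BlockCode

theorem delta_lower_bound_general (D : Finset (List ℤ)) (r r₁ r₂ : ℕ)
    (hr₁ : (∃ p ∈ D, List.replicate r₁ (0:ℤ) <+: p) ∧
      ∀ k : ℕ, (∃ p ∈ D, List.replicate k (0:ℤ) <+: p) → k ≤ r₁)
    (hr₂ : (∃ p ∈ D, List.replicate r₂ (0:ℤ) <:+ p) ∧
      ∀ k : ℕ, (∃ p ∈ D, List.replicate k (0:ℤ) <:+ p) → k ≤ r₂)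
    (hr : (∃ p ∈ D, List.replicate r (0:ℤ) <:+: p) ∧
      ∀ k : ℕ, (∃ p ∈ D, List.replicate k (0:ℤ) <:+: p) → k ≤ r)
    (n : ℕ) (hn : r₁ + r₂ ≤ n) (l : ℕ) :
    (⌈(delta D n : ℝ) / 2 ^ (r₁ + r₂)⌉₊) ^ l ≤ delta D (l * (n - r₁ - r₂ + r + 1)) := by
  obtain ⟨C, hClen, hC, hCcard⟩ := exists_avoidsCode_card_eq_delta D n
  obtain ⟨t₁, t₂, S, ht₁, ht₂, hSlen, hSC, hScard⟩ := exists_framed_subcode hClen hn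
  have hS : AvoidsCode D (S.image fun s => t₁ ++ s ++ t₂) := hC.mono hSC
  calc (⌈(delta D n : ℝ) / 2 ^ (r₁ + r₂)⌉₊) ^ l
      ≤ S.card ^ l := Nat.pow_le_pow_left (Nat.ceil_le.2 (hCcard ▸ hScard)) l
    _ = (blockCode S (r + 1) l).card := (card_blockCode hSlen l).symm
    _ ≤ delta D (l * (n - r₁ - r₂ + r + 1)) :=
      card_le_delta (fun u hu => by rw [length_of_mem_blockCode hSlen hu, add_assoc])
        (avoidsCode_blockCode hS hSlen ht₁ ht₂ hr₁.2 hr₂.2 hr.2 l)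

/-- `δ_N(D) ≥ ⌈2^{-(r₁+r₂)} δ_n(D)⌉^l` where `N = l(n - r₁ - r₂ + r + 1)`. -/
theorem delta_lower_bound (D : Finset (List ℤ)) (hDne : D.Nonempty)
    (hD : ∀ p ∈ D, IsPattern p) (r r₁ r₂ : ℕ)
    (hr₁ : (∃ p ∈ D, List.replicate r₁ (0:ℤ) <+: p) ∧
      ∀ k : ℕ, (∃ p ∈ D, List.replicate k (0:ℤ) <+: p) → k ≤ r₁)
    (hr₂ : (∃ p ∈ D, List.replicate r₂ (0:ℤ) <:+ p) ∧
      ∀ k : ℕ, (∃ p ∈ D, List.replicate k (0:ℤ) <:+ p) → k ≤ r₂)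
    (hr : (∃ p ∈ D, List.replicate r (0:ℤ) <:+: p) ∧
      ∀ k : ℕ, (∃ p ∈ D, List.replicate k (0:ℤ) <:+: p) → k ≤ r)
    (n : ℕ) (hn : r₁ + r₂ ≤ n) (l : ℕ) (hl : 1 ≤ l) :
    (⌈(delta D n : ℝ) / 2 ^ (r₁ + r₂)⌉₊) ^ l ≤ delta D (l * (n - r₁ - r₂ + r + 1)) :=
  delta_lower_bound_general D r r₁ r₂ hr₁ hr₂ hr n hn l
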